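/- arXiv:1702.07154 — 4 statements merged into one kernel-verified Lean document; each statement's English description precedes it below -/
import Mathlib

section
/- There exists a sequence (c_n) of real numbers that is not measurable in the sense of Fast but such that (|c_n|) is measurable. Concretely, if A, B are disjoint subsets of ℕ neither of which has natural density with A ∪ B = ℕ, and (a_n)_{n∈A}, (b_n)_{n∈B} are increasing sequences of positive reals converging to 1, then c_n = a_n for n ∈ A and c_n = -b_n for n ∈ B gives such a sequence. -/
/-!
The sequence `c` tends to `1` along `A` and to `-1` along `B`. For every `x ∈ (-1, 1)` the set
`{n | c n < x}` therefore agrees with `B` up to finitely many elements, so it has no density; as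
there are uncountably many such `x`, `c` is not measurable. On the other hand `|c n| → 1`, and a
convergent sequence is measurable with the single exceptional value its limit.
-/

open Filter MeasureTheory
open scoped Classical ENNReal

/-- `dens A c`: the set `A ⊆ ℕ` has natural density `c`. -/
def dens (A : Set ℕ) (c : ℝ) : Prop :=
  Tendsto (fun n : ℕ => (((Finset.range n).filter (fun k => k ∈ A)).card : ℝ) / n)
    atTop (nhds c)

/-- Statistical convergence of a real sequence. -/
def StatTendsto (a : ℕ → ℝ) (l : ℝ) : Prop :=
  ∀ ε > 0, dens {n | ε ≤ |a n - l|} 0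

/-- A sequence is measurable in the sense of Fast if the densities of the sets
`{n : a n < x}` exist outside an at most countable set of `x`'s. -/
def FastMeasurable (a : ℕ → ℝ) : Prop :=
  ∃ S : Set ℝ, S.Countable ∧ ∀ x ∉ S, ∃ c, dens {n | a n < x} c

lemma dens_congr_of_eventually {S T : Set ℕ} {c : ℝ} (h : ∀ᶠ n in atTop, n ∈ S ↔ n ∈ T)
    (hS : dens S c) : dens T c := by
  obtain ⟨N, hN⟩ := eventually_atTop.1 h
  let count (U : Set ℕ) (n : ℕ) : ℝ := ((Finset.range n).filter (· ∈ U)).card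
  -- beyond `N` the two counting functions grow in step
  have hshift : ∀ n ≥ N, count T n = count S n + (count T N - count S N) := by
    intro n hn
    have hIco : ∀ k ∈ Finset.Ico N n,
        (if k ∈ T then (1 : ℝ) else 0) = if k ∈ S then 1 else 0 := fun k hk => by
      rw [hN k (Finset.mem_Ico.1 hk).1]
    simp only [count, Finset.card_filter, Nat.cast_sum, Nat.cast_ite, Nat.cast_one,
      Nat.cast_zero, ← Finset.sum_range_add_sum_Ico _ hn, Finset.sum_congr rfl hIco]
    ring
  have hlim : Tendsto (fun n : ℕ => count S n / n + (count T N - count S N) / n) atTop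
      (nhds c) := by
    simpa using hS.add (tendsto_const_div_atTop_nhds_zero_nat (count T N - count S N))
  refine hlim.congr' ?_
  filter_upwards [eventually_ge_atTop N] with n hn
  show _ = count T n / n
  rw [hshift n hn, add_div]

lemma dens_empty : dens ∅ 0 := by
  simp [dens]

lemma dens_univ : dens Set.univ 1 := by
  refine tendsto_const_nhds.congr' ?_
  filter_upwards [eventually_gt_atTop 0] with n hn
  have hn' : (n : ℝ) ≠ 0 := Nat.cast_ne_zero.2 hn.ne'
  simp [Finset.filter_true_of_mem, hn']

lemma FastMeasurable.of_tendsto {f : ℕ → ℝ} {L : ℝ} (hf : Tendsto f atTop (nhds L)) :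
    FastMeasurable f := by
  refine ⟨{L}, Set.countable_singleton L, fun x hx => ?_⟩
  rcases lt_or_gt_of_ne (Set.mem_singleton_iff.not.1 hx) with hxL | hLx
  · refine ⟨0, dens_congr_of_eventually ?_ dens_empty⟩
    filter_upwards [hf.eventually (lt_mem_nhds hxL)] with n hn
    simp [hn.le]
  · refine ⟨1, dens_congr_of_eventually ?_ dens_univ⟩
    filter_upwards [hf.eventually (gt_mem_nhds hLx)] with n hn
    simp [hn]

lemma FastMeasurable.exists_dens_of_tendsto {f : ℕ → ℝ} {s : Set ℕ} {l L : ℝ} (hlL : l < L)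
    (hf : FastMeasurable f) (hs : Tendsto f (atTop ⊓ 𝓟 s) (nhds l))
    (hsc : Tendsto f (atTop ⊓ 𝓟 sᶜ) (nhds L)) : ∃ d, dens s d := by
  obtain ⟨S, hS, hdens⟩ := hf
  obtain ⟨x, hxS, hlx, hxL⟩ := (hS.dense_compl ℝ).exists_between hlL
  obtain ⟨d, hd⟩ := hdens x hxS
  refine ⟨d, dens_congr_of_eventually ?_ hd⟩
  have hlt : ∀ᶠ n in atTop, n ∈ s → f n < x :=
    eventually_inf_principal.1 (hs.eventually (gt_mem_nhds hlx))
  have hgt : ∀ᶠ n in atTop, n ∈ sᶜ → x < f n :=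
    eventually_inf_principal.1 (hsc.eventually (lt_mem_nhds hxL))
  filter_upwards [hlt, hgt] with n hn hn'
  by_cases hns : n ∈ s
  · simp [hns, hn hns]
  · simp [hns, (hn' hns).le]

theorem exists_nonmeasurable_with_measurable_abs_general
    (A B : Set ℕ) (hAB : Disjoint A B) (hUnion : A ∪ B = Set.univ)
    (hB : ¬ ∃ c, dens B c)
    (a b : ℕ → ℝ)
    (ha_lim : Tendsto a (atTop ⊓ Filter.principal A) (nhds 1))
    (hb_lim : Tendsto b (atTop ⊓ Filter.principal B) (nhds 1)) :
    ¬ FastMeasurable (fun n => if n ∈ A then a n else -(b n)) ∧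
      FastMeasurable (fun n => |if n ∈ A then a n else -(b n)|) := by
  obtain rfl : B = Aᶜ := (IsCompl.compl_eq ⟨hAB, codisjoint_iff.2 hUnion⟩).symm
  set c : ℕ → ℝ := fun n => if n ∈ A then a n else -(b n)
  have hcA : Tendsto c (atTop ⊓ 𝓟 A) (nhds 1) :=
    ha_lim.congr' (eventually_inf_principal.2 (Eventually.of_forall fun n hn => (if_pos hn).symm))
  have hcB : Tendsto c (atTop ⊓ 𝓟 Aᶜ) (nhds (-1)) :=
    hb_lim.neg.congr' (eventually_inf_principal.2 (Eventually.of_forall fun n hn => (if_neg hn).symm))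
  have habs : Tendsto (fun n => |c n|) atTop (nhds 1) := by
    have hcA' : Tendsto (fun n => |c n|) (atTop ⊓ 𝓟 A) (nhds 1) := by simpa using hcA.abs
    have hcB' : Tendsto (fun n => |c n|) (atTop ⊓ 𝓟 Aᶜ) (nhds 1) := by simpa using hcB.abs
    simpa using hcA'.if (p := (· ∈ A)) hcB'
  refine ⟨fun hc => hB ?_, FastMeasurable.of_tendsto habs⟩
  simpa using hc.exists_dens_of_tendsto (s := Aᶜ) (l := -1) (L := 1) (by norm_num) hcB (by simpa using hcA)

theorem exists_nonmeasurable_with_measurable_abs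
    (A B : Set ℕ) (hAB : Disjoint A B) (hUnion : A ∪ B = Set.univ)
    (hA : ¬ ∃ c, dens A c) (hB : ¬ ∃ c, dens B c)
    (a b : ℕ → ℝ)
    (ha_pos : ∀ n ∈ A, 0 < a n) (hb_pos : ∀ n ∈ B, 0 < b n)
    (ha_mono : ∀ m ∈ A, ∀ n ∈ A, m < n → a m < a n)
    (hb_mono : ∀ m ∈ B, ∀ n ∈ B, m < n → b m < b n)
    (ha_lim : Tendsto a (atTop ⊓ Filter.principal A) (nhds 1))
    (hb_lim : Tendsto b (atTop ⊓ Filter.principal B) (nhds 1)) :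
    ¬ FastMeasurable (fun n => if n ∈ A then a n else -(b n)) ∧
      FastMeasurable (fun n => |if n ∈ A then a n else -(b n)|) :=
  exists_nonmeasurable_with_measurable_abs_general A B hAB hUnion hB a b ha_lim hb_lim
end

section
/- Let (f_n) be a sequence of measurable functions on a measure space. If (f_n) is statistically almost uniformly Cauchy, then for every B ⊆ ℕ with d(B) = 1, every ε > 0 there exists D measurable with λ(D) < ε such that: for every ε' > 0 and every N ∈ B there exists n₁ ∈ B with n₁ ≥ N and d({n ∈ B : sup_{x∉D} |f_n(x) - f_{n₁}(x)| < ε'}) = 1. -/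
/-! Take `D` from the Cauchy condition for `ε`. Given `ε'`, the indices `n` with
`supDist (f n) (f n₀) D < ε' / 2` form a set of density one; its intersection with `B` still has
density one, so it is infinite and contains some `n₁ ≥ N`. By the triangle inequality through
`f n₀`, every index of that intersection is `ε'`-close to `n₁`. -/

open Filter MeasureTheory
open scoped Classical ENNReal

/-- `supDist f g D`: the (extended-real) supremum of `|f x - g x|` over `x ∉ D`. -/
noncomputable def supDist {X : Type*} (f g : X → ℝ) (D : Set X) : ℝ≥0∞ :=
  ⨆ x ∈ Dᶜ, ENNReal.ofReal |f x - g x|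

/-- `(f n)` is statistically almost uniformly Cauchy. -/
def StatAUCauchy {X : Type*} [MeasurableSpace X] (μ : MeasureTheory.Measure X)
    (f : ℕ → X → ℝ) : Prop :=
  ∀ ε > (0 : ℝ), ∃ D : Set X, MeasurableSet D ∧ μ D < ENNReal.ofReal ε ∧
    ∀ ε' > (0 : ℝ), ∃ n₀ : ℕ,
      dens {n | ENNReal.ofReal ε' ≤ supDist (f n) (f n₀) D} 0

/-- `(f n)` converges statistically almost uniformly to `g`. -/
def StatAUTendsto {X : Type*} [MeasurableSpace X] (μ : MeasureTheory.Measure X)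
    (f : ℕ → X → ℝ) (g : X → ℝ) : Prop :=
  ∀ ε > (0 : ℝ), ∃ D : Set X, MeasurableSet D ∧ μ D < ENNReal.ofReal ε ∧
    ∀ ε' > (0 : ℝ), dens {n | ENNReal.ofReal ε' ≤ supDist (f n) g D} 0

noncomputable def densRatio (A : Set ℕ) (n : ℕ) : ℝ :=
  (((Finset.range n).filter (fun k => k ∈ A)).card : ℝ) / n

lemma densRatio_nonneg (A : Set ℕ) (n : ℕ) : 0 ≤ densRatio A n := by
  unfold densRatio
  positivity

lemma densRatio_le_one (A : Set ℕ) (n : ℕ) : densRatio A n ≤ 1 := by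
  unfold densRatio
  rcases Nat.eq_zero_or_pos n with rfl | hn
  · simp
  · rw [div_le_one (by exact_mod_cast hn)]
    exact_mod_cast (Finset.card_filter_le _ _).trans_eq (Finset.card_range n)

lemma densRatio_mono {A C : Set ℕ} (hAC : A ⊆ C) (n : ℕ) : densRatio A n ≤ densRatio C n := by
  unfold densRatio
  gcongr

lemma densRatio_compl (A : Set ℕ) {n : ℕ} (hn : n ≠ 0) :
    densRatio Aᶜ n = 1 - densRatio A n := by
  unfold densRatio
  rw [eq_sub_iff_add_eq, ← add_div, div_eq_one_iff_eq (by exact_mod_cast hn), add_comm]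
  norm_cast
  convert Finset.card_filter_add_card_filter_not (s := Finset.range n) (· ∈ A)
  exact (Finset.card_range n).symm

lemma densRatio_add_le_inter (A C : Set ℕ) (n : ℕ) :
    densRatio A n + densRatio C n ≤ densRatio (A ∩ C) n + 1 := by
  rcases Nat.eq_zero_or_pos n with rfl | hn
  · simp [densRatio]
  have hn' : (0 : ℝ) < n := by exact_mod_cast hn
  unfold densRatio
  rw [← add_div, ← div_self hn'.ne', ← add_div]
  gcongr ?_ / _
  norm_cast
  rw [← Finset.card_union_add_card_inter, add_comm]
  gcongr
  · intro k hk
    simp_all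
  · exact (Finset.card_le_card (Finset.union_subset (Finset.filter_subset _ _)
      (Finset.filter_subset _ _))).trans_eq (Finset.card_range n)

lemma dens_iff_tendsto_densRatio {A : Set ℕ} {c : ℝ} :
    dens A c ↔ Tendsto (densRatio A) atTop (nhds c) := Iff.rfl

lemma dens_compl {A : Set ℕ} {c : ℝ} (h : dens A c) : dens Aᶜ (1 - c) := by
  rw [dens_iff_tendsto_densRatio] at h ⊢
  refine (tendsto_const_nhds.sub h).congr' ?_
  filter_upwards [eventually_ne_atTop 0] with n hn
  exact (densRatio_compl A hn).symm

lemma dens_zero_of_finite {A : Set ℕ} (hA : A.Finite) : dens A 0 := by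
  rw [dens_iff_tendsto_densRatio]
  refine tendsto_of_tendsto_of_tendsto_of_le_of_le tendsto_const_nhds
    (tendsto_const_div_atTop_nhds_zero_nat (hA.toFinset.card : ℝ)) (densRatio_nonneg A)
    fun n => ?_
  unfold densRatio
  gcongr
  exact fun k hk => hA.mem_toFinset.2 (Finset.mem_filter.1 hk).2

lemma infinite_of_dens {A : Set ℕ} {c : ℝ} (h : dens A c) (hc : c ≠ 0) : A.Infinite :=
  fun hA => hc (tendsto_nhds_unique h (dens_zero_of_finite hA))

lemma dens_one_mono {A C : Set ℕ} (hAC : A ⊆ C) (hA : dens A 1) : dens C 1 :=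
  tendsto_of_tendsto_of_tendsto_of_le_of_le hA tendsto_const_nhds (densRatio_mono hAC)
    (densRatio_le_one C)

lemma dens_one_inter {A C : Set ℕ} (hA : dens A 1) (hC : dens C 1) : dens (A ∩ C) 1 := by
  rw [dens_iff_tendsto_densRatio] at hA hC ⊢
  have hlower : Tendsto (fun n => densRatio A n + densRatio C n - 1) atTop (nhds 1) := by
    simpa using (hA.add hC).sub_const 1
  exact tendsto_of_tendsto_of_tendsto_of_le_of_le hlower tendsto_const_nhds
    (fun n => by linarith [densRatio_add_le_inter A C n]) (densRatio_le_one _)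

section supDist

variable {X : Type*}

lemma supDist_comm (f g : X → ℝ) (D : Set X) : supDist f g D = supDist g f D := by
  simp only [supDist, abs_sub_comm]

lemma supDist_triangle (f g h : X → ℝ) (D : Set X) :
    supDist f h D ≤ supDist f g D + supDist g h D := by
  refine iSup₂_le fun x hx => ?_
  calc ENNReal.ofReal |f x - h x|
      ≤ ENNReal.ofReal (|f x - g x| + |g x - h x|) := ENNReal.ofReal_le_ofReal (abs_sub_le _ _ _)
    _ ≤ ENNReal.ofReal |f x - g x| + ENNReal.ofReal |g x - h x| := ENNReal.ofReal_add_le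
    _ ≤ supDist f g D + supDist g h D := by
      gcongr
      · exact le_iSup₂ (f := fun x (_ : x ∈ Dᶜ) => ENNReal.ofReal |f x - g x|) x hx
      · exact le_iSup₂ (f := fun x (_ : x ∈ Dᶜ) => ENNReal.ofReal |g x - h x|) x hx

lemma supDist_lt_add {f g h : X → ℝ} {D : Set X} {a b : ℝ≥0∞}
    (hfg : supDist f g D < a) (hhg : supDist h g D < b) : supDist f h D < a + b :=
  (supDist_triangle f g h D).trans_lt
    (ENNReal.add_lt_add hfg (supDist_comm g h D ▸ hhg))

end supDist

theorem statAUCauchy_large_index_general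
    {X : Type*} [MeasurableSpace X] (μ : Measure X) (f : ℕ → X → ℝ)
    (h : StatAUCauchy μ f) :
    ∀ B : Set ℕ, dens B 1 → ∀ ε > (0 : ℝ),
      ∃ D : Set X, MeasurableSet D ∧ μ D < ENNReal.ofReal ε ∧
        ∀ ε' > (0 : ℝ), ∀ N ∈ B, ∃ n₁ ∈ B, N ≤ n₁ ∧
          dens {n | n ∈ B ∧ supDist (f n) (f n₁) D < ENNReal.ofReal ε'} 1 := by
  intro B hB ε hε
  obtain ⟨D, hD, hμD, hCauchy⟩ := h ε hε
  refine ⟨D, hD, hμD, fun ε' hε' N _ => ?_⟩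
  obtain ⟨n₀, hn₀⟩ := hCauchy (ε' / 2) (half_pos hε')
  set G := {n | supDist (f n) (f n₀) D < ENNReal.ofReal (ε' / 2)}
  have hG : dens G 1 := by simpa [G, Set.compl_ofPred, not_le] using dens_compl hn₀
  have hBG := dens_one_inter hB hG
  obtain ⟨n₁, ⟨hn₁B, hn₁G⟩, hNn₁⟩ := (infinite_of_dens hBG one_ne_zero).exists_gt N
  refine ⟨n₁, hn₁B, hNn₁.le, dens_one_mono ?_ hBG⟩
  rintro n ⟨hnB, hnG⟩
  refine ⟨hnB, ?_⟩
  have hε'_halves : ENNReal.ofReal (ε' / 2) + ENNReal.ofReal (ε' / 2) = ENNReal.ofReal ε' := by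
    rw [← ENNReal.ofReal_add (by positivity) (by positivity), add_halves]
  exact hε'_halves ▸ supDist_lt_add hnG hn₁G

theorem statAUCauchy_large_index
    {X : Type*} [MeasurableSpace X] (μ : Measure X) (f : ℕ → X → ℝ)
    (hf : ∀ n, Measurable (f n)) (h : StatAUCauchy μ f) :
    ∀ B : Set ℕ, dens B 1 → ∀ ε > (0 : ℝ),
      ∃ D : Set X, MeasurableSet D ∧ μ D < ENNReal.ofReal ε ∧
        ∀ ε' > (0 : ℝ), ∀ N ∈ B, ∃ n₁ ∈ B, N ≤ n₁ ∧
          dens {n | n ∈ B ∧ supDist (f n) (f n₁) D < ENNReal.ofReal ε'} 1 :=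
  statAUCauchy_large_index_general μ f h
end

section
/- (Statistical Riesz theorem) A sequence (f_n) of measurable functions on [0,1) is statistically Cauchy in measure (for all ε, δ > 0 there exists n₀ with d({n : λ(|f_n - f_{n₀}| ≥ ε) ≥ δ}) = 0) if and only if there exists a measurable f such that (f_n) converges statistically in measure to f. -/
/-!
Pick `m k` witnessing statistical Cauchyness at scale `2⁻ᵏ`. Two sets of density zero cannot
cover `ℕ`, so some `n` lies outside both the exceptional sets of `m k` and `m (k + 1)`; comparing
through `f n` shows that `f (m k)` and `f (m (k + 1))` are `2⁻ᵏ`-close in measure. By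
Borel–Cantelli the subsequence `f ∘ m` then converges a.e., hence in measure, to a measurable
`g`, and the triangle inequality transfers this to statistical convergence of the whole sequence.
The converse is the triangle inequality through a single index outside a set of density zero.
-/

open Filter MeasureTheory
open scoped Classical ENNReal

open Topology

lemma dens_zero_mono {A B : Set ℕ} (hAB : A ⊆ B) (hB : dens B 0) : dens A 0 :=
  tendsto_of_tendsto_of_tendsto_of_le_of_le tendsto_const_nhds hB (fun _ => by positivity)
    fun n => by dsimp only; gcongr

lemma dens_zero_union {A B : Set ℕ} (hA : dens A 0) (hB : dens B 0) : dens (A ∪ B) 0 := by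
  refine tendsto_of_tendsto_of_tendsto_of_le_of_le tendsto_const_nhds (by simpa using hA.add hB)
    (fun _ => by positivity) fun n => ?_
  dsimp only
  rw [← add_div]
  simp only [Set.mem_union, Finset.filter_or]
  gcongr
  exact_mod_cast Finset.card_union_le _ _

lemma exists_notMem_of_dens_zero {A : Set ℕ} (hA : dens A 0) : ∃ n, n ∉ A := by
  by_contra! hA_univ
  have hA_one : dens A 1 := by
    refine tendsto_const_nhds.congr' ?_
    filter_upwards [eventually_ge_atTop 1] with n hn
    rw [Finset.filter_true_of_mem fun k _ => hA_univ k, Finset.card_range, div_self (by positivity)]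
  exact zero_ne_one (tendsto_nhds_unique hA hA_one)

section InMeasure

variable {α : Type*} [MeasurableSpace α]

def StatCauchyInMeasure (μ : Measure α) (f : ℕ → α → ℝ) : Prop :=
  ∀ ε > (0:ℝ), ∀ δ > (0:ℝ), ∃ n₀ : ℕ, dens {n | δ ≤ μ.real {x | ε ≤ |f n x - f n₀ x|}} 0

def StatTendstoInMeasure (μ : Measure α) (f : ℕ → α → ℝ) (g : α → ℝ) : Prop :=
  ∀ ε > 0, StatTendsto (fun n => μ.real {x | ε ≤ |f n x - g x|}) 0

variable {μ : Measure α} {f : ℕ → α → ℝ} {g : α → ℝ}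

lemma statTendstoInMeasure_iff :
    StatTendstoInMeasure μ f g ↔
      ∀ ε > 0, ∀ δ > 0, dens {n | δ ≤ μ.real {x | ε ≤ |f n x - g x|}} 0 := by
  simp only [StatTendstoInMeasure, StatTendsto, sub_zero, abs_of_nonneg measureReal_nonneg]

lemma measureReal_abs_sub_comm (u v : α → ℝ) (ε : ℝ) :
    μ.real {x | ε ≤ |u x - v x|} = μ.real {x | ε ≤ |v x - u x|} := by
  simp_rw [abs_sub_comm]

variable [IsFiniteMeasure μ]

lemma measureReal_abs_sub_le_add (u v w : α → ℝ) (ε₁ ε₂ : ℝ) :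
    μ.real {x | ε₁ + ε₂ ≤ |u x - w x|} ≤
      μ.real {x | ε₁ ≤ |u x - v x|} + μ.real {x | ε₂ ≤ |v x - w x|} := by
  refine (measureReal_mono fun x hx => ?_).trans (measureReal_union_le _ _)
  by_contra! hx'
  simp only [Set.mem_ofPred_eq, Set.mem_union, not_or, not_le] at hx hx'
  linarith [abs_sub_le (u x) (v x) (w x)]

lemma measureReal_abs_sub_le_of_dens_zero {u v : α → ℝ} {ε₁ ε₂ δ₁ δ₂ : ℝ}
    (hu : dens {n | δ₁ ≤ μ.real {x | ε₁ ≤ |f n x - u x|}} 0)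
    (hv : dens {n | δ₂ ≤ μ.real {x | ε₂ ≤ |f n x - v x|}} 0) :
    μ.real {x | ε₁ + ε₂ ≤ |u x - v x|} ≤ δ₁ + δ₂ := by
  obtain ⟨n, hn⟩ := exists_notMem_of_dens_zero (dens_zero_union hu hv)
  simp only [Set.mem_union, Set.mem_ofPred_eq, not_or, not_le] at hn
  have := measureReal_abs_sub_le_add (μ := μ) u (f n) v ε₁ ε₂
  rw [measureReal_abs_sub_comm u (f n)] at this
  linarith

lemma StatTendstoInMeasure.statCauchyInMeasure (h : StatTendstoInMeasure μ f g) :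
    StatCauchyInMeasure μ f := by
  intro ε hε δ hδ
  have hS := statTendstoInMeasure_iff.1 h (ε / 2) (by positivity) (δ / 2) (by positivity)
  obtain ⟨n₀, hn₀⟩ := exists_notMem_of_dens_zero hS
  refine ⟨n₀, dens_zero_mono (fun n hn => ?_) hS⟩
  simp only [Set.mem_ofPred_eq, not_le] at hn hn₀ ⊢
  have := measureReal_abs_sub_le_add (μ := μ) (f n) g (f n₀) (ε / 2) (ε / 2)
  rw [add_halves, measureReal_abs_sub_comm g] at this
  linarith

lemma cauchySeq_of_eventually_dist_le_of_summable {E : Type*} [PseudoMetricSpace E]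
    {a : ℕ → E} {c : ℕ → ℝ} (hc : Summable c) (h : ∀ᶠ k in atTop, dist (a k) (a (k + 1)) ≤ c k) :
    CauchySeq a := by
  obtain ⟨N, hN⟩ := eventually_atTop.1 h
  refine (cauchySeq_shift N).1 (cauchySeq_of_dist_le_of_summable (fun k => c (k + N)) ?_
    ((summable_nat_add_iff N).2 hc))
  intro k
  simpa only [Nat.succ_add] using hN (k + N) (Nat.le_add_left N k)

lemma exists_measurable_tendsto_ae_of_summable {u : ℕ → α → ℝ} (hu : ∀ k, Measurable (u k))
    {c : ℕ → ℝ} (hc : Summable c) (h : ∀ k, μ.real {x | c k ≤ |u k x - u (k + 1) x|} ≤ c k) :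
    ∃ g : α → ℝ, Measurable g ∧ ∀ᵐ x ∂μ, Tendsto (u · x) atTop (𝓝 (g x)) := by
  have hc_nonneg k : 0 ≤ c k := measureReal_nonneg.trans (h k)
  have hsum : ∑' k, μ {x | c k ≤ |u k x - u (k + 1) x|} ≠ ⊤ := by
    refine ne_top_of_le_ne_top ?_ (ENNReal.tsum_le_tsum fun k =>
      (ENNReal.le_ofReal_iff_toReal_le (measure_ne_top _ _) (hc_nonneg k)).2 (h k))
    rw [← ENNReal.ofReal_tsum_of_nonneg hc_nonneg hc]
    exact ENNReal.ofReal_ne_top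
  refine ⟨fun x => limUnder atTop (u · x),
    (StronglyMeasurable.limUnder fun k => (hu k).stronglyMeasurable).measurable, ?_⟩
  filter_upwards [ae_eventually_notMem hsum] with x hx
  refine tendsto_nhds_limUnder (cauchySeq_tendsto_of_complete
    (cauchySeq_of_eventually_dist_le_of_summable hc ?_))
  filter_upwards [hx] with k hk
  simp only [not_le] at hk
  exact (Real.dist_eq _ _).trans_le hk.le

lemma statTendstoInMeasure_of_tendstoInMeasure_comp {m : ℕ → ℕ} {η : ℕ → ℝ}
    (hη : Tendsto η atTop (𝓝 0))
    (hm : ∀ k, dens {n | η k ≤ μ.real {x | η k ≤ |f n x - f (m k) x|}} 0)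
    (hg : TendstoInMeasure μ (fun k => f (m k)) atTop g) :
    StatTendstoInMeasure μ f g := by
  refine statTendstoInMeasure_iff.2 fun ε hε δ hδ => ?_
  have hη_small := hη.eventually (gt_mem_nhds (show 0 < min (ε / 2) (δ / 2) by positivity))
  have hg_small := (tendstoInMeasure_iff_measureReal_dist.1 hg (ε / 2) (by positivity)).eventually
    (gt_mem_nhds (show 0 < δ / 2 by positivity))
  obtain ⟨k, hk_η, hk_g⟩ := (hη_small.and hg_small).exists
  simp only [lt_min_iff, Real.dist_eq] at hk_η hk_g
  refine dens_zero_mono (fun n hn => ?_) (hm k)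
  simp only [Set.mem_ofPred_eq] at hn ⊢
  have htri := measureReal_abs_sub_le_add (μ := μ) (f n) (f (m k)) g (ε / 2) (ε / 2)
  have hη_le : μ.real {x | ε / 2 ≤ |f n x - f (m k) x|} ≤ μ.real {x | η k ≤ |f n x - f (m k) x|} :=
    measureReal_mono fun x hx => hk_η.1.le.trans hx
  rw [add_halves] at htri
  linarith

theorem StatCauchyInMeasure.exists_statTendstoInMeasure (hf : ∀ n, Measurable (f n))
    (h : StatCauchyInMeasure μ f) : ∃ g, Measurable g ∧ StatTendstoInMeasure μ f g := by
  choose m hm using fun k : ℕ => h ((1 / 2) ^ k) (by positivity) ((1 / 2) ^ k) (by positivity)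
  have hclose k : μ.real {x | (1 / 2) ^ k + (1 / 2) ^ (k + 1) ≤ |f (m k) x - f (m (k + 1)) x|} ≤
      (1 / 2) ^ k + (1 / 2) ^ (k + 1) :=
    measureReal_abs_sub_le_of_dens_zero (hm k) (hm (k + 1))
  have hsum : Summable fun k : ℕ => ((1:ℝ) / 2) ^ k + (1 / 2) ^ (k + 1) :=
    summable_geometric_two.add ((summable_nat_add_iff 1).2 summable_geometric_two)
  obtain ⟨g, hg, hlim⟩ := exists_measurable_tendsto_ae_of_summable (fun k => hf (m k)) hsum hclose
  exact ⟨g, hg, statTendstoInMeasure_of_tendstoInMeasure_comp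
    (tendsto_pow_atTop_nhds_zero_of_lt_one (by norm_num) (by norm_num)) hm
    (tendstoInMeasure_of_tendsto_ae (fun k => (hf (m k)).aestronglyMeasurable) hlim)⟩

end InMeasure

theorem stat_riesz
    (f : ℕ → ℝ → ℝ) (hf : ∀ n, Measurable (f n))
    (μ : Measure ℝ) (hμ : μ = volume.restrict (Set.Ico (0:ℝ) 1)) :
    (∀ ε > (0:ℝ), ∀ δ > (0:ℝ), ∃ n₀ : ℕ,
        dens {n | δ ≤ (μ {x | ε ≤ |f n x - f n₀ x|}).toReal} 0) ↔
      ∃ g : ℝ → ℝ, Measurable g ∧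
        ∀ ε > 0, StatTendsto (fun n => (μ {x | ε ≤ |f n x - g x|}).toReal) 0 := by
  have : IsFiniteMeasure μ := by
    rw [hμ, isFiniteMeasure_restrict, Real.volume_Ico]
    exact ENNReal.ofReal_ne_top
  exact ⟨StatCauchyInMeasure.exists_statTendstoInMeasure hf,
    fun ⟨_, _, hg⟩ => StatTendstoInMeasure.statCauchyInMeasure hg⟩
end

section
/- (Failure of Egorov for statistical convergence) Define f_k = χ_{[(j-1)/2^n, j/2^n)} on [0,1) when k = 2 + 2² + ... + 2^{n-1} + j with 1 ≤ j ≤ 2^n. Then (f_k) converges statistically almost everywhere to 0, but for every K ⊆ ℕ with d(K) = 1, λ-almost every x ∈ [0,1) lies in the support interval of f_{k} for infinitely many k ∈ K; consequently (f_k) does not converge statistically almost uniformly to 0. -/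
open Filter MeasureTheory
open scoped Classical ENNReal

/-!
The support of `f_k` is the dyadic interval of generation `n = log₂ (k + 1)`, and the `2^n`
intervals of generation `n` partition `[0, 1)`. Hence for each `x` at most one `k` per generation
has `f_k x ≠ 0`, a set of at most `log₂ N + 1` indices below `N`: this is statistical convergence
everywhere. If `d(K) = 1`, the indices of generation `n` outside `K` are `o(2^n)`, so the set of
points whose generation-`n` interval is missed by `K` has measure `o(1)`; a point lying in this set
for all large `n` lies in a null set. Finally, if `(f_k)` converged statistically almost uniformly
outside `D`, the indices `k` with `sup_{Dᶜ} f_k < 1` would form a set of density one, whose supports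
cover almost every point of `[0, 1)` and are contained in `D`, so `λ(D) = 1`.
-/

open Filter MeasureTheory Set Topology

lemma dens.compl {A : Set ℕ} {c : ℝ} (hA : dens A c) : dens Aᶜ (1 - c) := by
  refine ((tendsto_const_nhds (x := (1 : ℝ))).sub hA).congr' ?_
  filter_upwards [eventually_ne_atTop 0] with N hN
  have hsplit := (Finset.range N).card_filter_add_card_filter_not (· ∈ A)
  rw [Finset.card_range] at hsplit
  have hcompl : (((Finset.range N).filter (· ∉ A)).card : ℝ) =
      N - ((Finset.range N).filter (· ∈ A)).card :=
    eq_sub_of_add_eq' (by exact_mod_cast hsplit)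
  simp only [mem_compl_iff]
  rw [hcompl, sub_div, div_self (Nat.cast_ne_zero.2 hN)]

/-- A set meeting each dyadic block `[2^n - 1, 2^(n+1) - 1)` at most once has density zero. -/
lemma dens_zero_of_injOn_log {A : Set ℕ} (hA : InjOn (fun k => Nat.log 2 (k + 1)) A) :
    dens A 0 := by
  have hcard : ∀ N : ℕ, (((Finset.range N).filter (· ∈ A)).card : ℝ) ≤ Real.logb 2 N + 1 := by
    intro N
    have hmaps : MapsTo (fun k => Nat.log 2 (k + 1)) ((Finset.range N).filter (· ∈ A))
        (Finset.range (Nat.log 2 N + 1)) := by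
      intro k hk
      simp only [Finset.mem_coe, Finset.mem_filter, Finset.mem_range] at hk ⊢
      exact Nat.lt_succ_of_le (Nat.log_mono_right hk.1)
    have hle := Finset.card_le_card_of_injOn _ hmaps (hA.mono fun k hk => by simp_all)
    rw [Finset.card_range] at hle
    calc (((Finset.range N).filter (· ∈ A)).card : ℝ) ≤ (Nat.log 2 N : ℝ) + 1 := by
          exact_mod_cast hle
      _ ≤ Real.logb 2 N + 1 := by gcongr; exact Real.natLog_le_logb N 2
  have hlim : Tendsto (fun N : ℕ => (Real.logb 2 N + 1) / N) atTop (𝓝 0) := by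
    have hlog := (Real.tendsto_pow_logb_div_mul_add_atTop (b := 2) 1 0 1 one_ne_zero).comp
      (tendsto_natCast_atTop_atTop (R := ℝ))
    have hinv := tendsto_inv_atTop_zero.comp (tendsto_natCast_atTop_atTop (R := ℝ))
    simpa [add_div] using hlog.add hinv
  exact squeeze_zero (fun N => by positivity)
    (fun N => div_le_div_of_nonneg_right (hcard N) N.cast_nonneg) hlim

lemma dens.tendsto_card_block_div {A : Set ℕ} (hA : dens A 0) :
    Tendsto (fun n : ℕ =>
      (((Finset.Icc 1 (2 ^ n)).filter (fun j => 2 ^ n - 2 + j ∈ A)).card : ℝ) / 2 ^ n)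
      atTop (𝓝 0) := by
  have hsub : Tendsto (fun n : ℕ => 2 ^ (n + 1)) atTop atTop :=
    (tendsto_pow_atTop_atTop_of_one_lt one_lt_two).comp (tendsto_add_atTop_nat 1)
  have hlim := (hA.comp hsub).const_mul 2
  rw [mul_zero] at hlim
  refine squeeze_zero (fun n => by positivity) (fun n => ?_) hlim
  have hmaps : MapsTo (fun j => 2 ^ n - 2 + j)
      ((Finset.Icc 1 (2 ^ n)).filter (fun j => 2 ^ n - 2 + j ∈ A))
      ((Finset.range (2 ^ (n + 1))).filter (· ∈ A)) := by
    intro j hj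
    simp only [Finset.mem_coe, Finset.mem_filter, Finset.mem_Icc, Finset.mem_range] at hj ⊢
    refine ⟨?_, hj.2⟩
    rw [pow_succ]
    omega
  have hle := Finset.card_le_card_of_injOn _ hmaps fun a _ b _ h => by simpa using h
  calc _ ≤ (((Finset.range (2 ^ (n + 1))).filter (· ∈ A)).card : ℝ) / 2 ^ n := by gcongr
    _ = 2 * ((((Finset.range (2 ^ (n + 1))).filter (· ∈ A)).card : ℝ) /
          ((2 ^ (n + 1) : ℕ) : ℝ)) := by
      push_cast [pow_succ]
      field_simp

def dyadicIco (n j : ℕ) : Set ℝ := Ico ((j - 1 : ℝ) / 2 ^ n) ((j : ℝ) / 2 ^ n)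

lemma mem_dyadicIco_iff {n j : ℕ} {x : ℝ} :
    x ∈ dyadicIco n j ↔ ⌊(2 : ℝ) ^ n * x⌋ = (j : ℤ) - 1 := by
  have hpow : (0 : ℝ) < 2 ^ n := by positivity
  rw [dyadicIco, mem_Ico, Int.floor_eq_iff, div_le_iff₀ hpow, lt_div_iff₀ hpow]
  push_cast
  constructor <;> rintro ⟨h₁, h₂⟩ <;> constructor <;> linarith

lemma eq_of_mem_dyadicIco {n j j' : ℕ} {x : ℝ} (hj : x ∈ dyadicIco n j)
    (hj' : x ∈ dyadicIco n j') : j = j' := by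
  rw [mem_dyadicIco_iff] at hj hj'
  omega

lemma exists_mem_dyadicIco (n : ℕ) {x : ℝ} (hx : x ∈ Ico (0 : ℝ) 1) :
    ∃ j, 1 ≤ j ∧ j ≤ 2 ^ n ∧ x ∈ dyadicIco n j := by
  have hpow : (0 : ℝ) < 2 ^ n := by positivity
  have hfloor : ⌊(2 : ℝ) ^ n * x⌋₊ < 2 ^ n := by
    rw [Nat.floor_lt (by nlinarith [hx.1])]
    push_cast
    nlinarith [hx.2]
  refine ⟨⌊(2 : ℝ) ^ n * x⌋₊ + 1, by omega, hfloor, ?_⟩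
  rw [mem_dyadicIco_iff, ← Int.natCast_floor_eq_floor (by nlinarith [hx.1])]
  push_cast
  ring

lemma volume_biUnion_dyadicIco_le (n : ℕ) (J : Finset ℕ) :
    volume (⋃ j ∈ J, dyadicIco n j) ≤ ENNReal.ofReal (J.card / 2 ^ n) := by
  calc volume (⋃ j ∈ J, dyadicIco n j) ≤ ∑ j ∈ J, volume (dyadicIco n j) :=
        measure_biUnion_finset_le _ _
    _ = ∑ _j ∈ J, ENNReal.ofReal (1 / 2 ^ n) := by
        refine Finset.sum_congr rfl fun j _ => ?_
        rw [dyadicIco, Real.volume_Ico]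
        ring_nf
    _ = ENNReal.ofReal (J.card / 2 ^ n) := by
        rw [Finset.sum_const, nsmul_eq_mul, ← ENNReal.ofReal_natCast,
          ← ENNReal.ofReal_mul J.card.cast_nonneg, mul_one_div]

lemma dens.tendsto_volume_biUnion_dyadicIco {A : Set ℕ} (hA : dens A 0) :
    Tendsto (fun n => volume
      (⋃ j ∈ (Finset.Icc 1 (2 ^ n)).filter (fun j => 2 ^ n - 2 + j ∈ A), dyadicIco n j))
      atTop (𝓝 0) := by
  have hlim := ENNReal.tendsto_ofReal hA.tendsto_card_block_div
  rw [ENNReal.ofReal_zero] at hlim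
  exact tendsto_of_tendsto_of_tendsto_of_le_of_le tendsto_const_nhds hlim (fun _ => zero_le)
    fun n => volume_biUnion_dyadicIco_le n _

lemma ae_frequently_notMem_of_tendsto_measure_zero {α : Type*} [MeasurableSpace α]
    {μ : Measure α} {s : ℕ → Set α} (hs : Tendsto (fun n => μ (s n)) atTop (𝓝 0)) :
    ∀ᵐ x ∂μ, ∃ᶠ n in atTop, x ∉ s n := by
  have htail : ∀ m, μ (⋂ n ≥ m, s n) = 0 := fun m =>
    le_antisymm (ge_of_tendsto hs (eventually_atTop.2
      ⟨m, fun n hn => measure_mono (biInter_subset_of_mem hn)⟩)) bot_le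
  filter_upwards [measure_eq_zero_iff_ae_notMem.1 (measure_iUnion_null htail)] with x hx
  refine frequently_atTop.2 fun m => ?_
  by_contra! H
  exact hx (mem_iUnion.2 ⟨m, mem_iInter₂.2 H⟩)

lemma le_supDist {X : Type*} {f g : X → ℝ} {D : Set X} {x : X} (hx : x ∉ D) :
    ENNReal.ofReal |f x - g x| ≤ supDist f g D :=
  le_iSup₂ (f := fun x (_ : x ∈ Dᶜ) => ENNReal.ofReal |f x - g x|) x hx

lemma not_statAUTendsto_zero_of_forall_dens_one {X : Type*} [MeasurableSpace X]
    {μ : Measure X} (hμ : μ ≠ 0) {f : ℕ → X → ℝ}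
    (hcover : ∀ K : Set ℕ, dens K 1 → ∀ᵐ x ∂μ, ∃ k ∈ K, f k x = 1) :
    ¬ StatAUTendsto μ f 0 := by
  intro hf
  obtain ⟨r, -, hr, hrμ⟩ := ENNReal.lt_iff_exists_real_btwn.1 (Measure.measure_univ_pos.2 hμ)
  obtain ⟨D, -, hD, hdens⟩ := hf r (ENNReal.ofReal_pos.1 hr)
  have hK : dens {k | supDist (f k) 0 D < ENNReal.ofReal 1} 1 := by
    have h := (hdens 1 one_pos).compl
    rw [sub_zero] at h
    convert h using 2
    ext k
    simp
  have hDc : μ Dᶜ = 0 := by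
    refine ae_iff.1 ((hcover _ hK).mono fun x ⟨k, hk, hfx⟩ => ?_)
    by_contra hxD
    have h := (le_supDist (g := 0) hxD).trans_lt hk
    simp [hfx] at h
  have h := measure_univ_le_add_compl (μ := μ) D
  rw [hDc, add_zero] at h
  exact (hD.trans hrμ).not_ge h

def IsTypewriter (f : ℕ → ℝ → ℝ) : Prop :=
  ∀ n : ℕ, 1 ≤ n → ∀ j : ℕ, 1 ≤ j → j ≤ 2 ^ n → f (2 ^ n - 2 + j) = (dyadicIco n j).indicator 1

namespace IsTypewriter

variable {f : ℕ → ℝ → ℝ} (hf : IsTypewriter f)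
include hf

lemma mem_dyadicIco_of_ne_zero {k : ℕ} (hk : k ≠ 0) {x : ℝ} (hx : f k x ≠ 0) :
    x ∈ dyadicIco (Nat.log 2 (k + 1)) (k + 2 - 2 ^ Nat.log 2 (k + 1)) := by
  set n := Nat.log 2 (k + 1)
  have hlo : 2 ^ n ≤ k + 1 := Nat.pow_log_le_self 2 (by omega)
  have hhi : k + 1 < 2 * 2 ^ n := by rw [← pow_succ']; exact Nat.lt_pow_succ_log_self one_lt_two _
  have hn : 1 ≤ n := Nat.le_log_of_pow_le one_lt_two (by omega)
  have hfk := hf n hn (k + 2 - 2 ^ n) (by omega) (by omega)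
  rw [show 2 ^ n - 2 + (k + 2 - 2 ^ n) = k by omega] at hfk
  by_contra hxI
  exact hx (by rw [hfk, indicator_of_notMem hxI])

lemma injOn_log_support (x : ℝ) : InjOn (fun k => Nat.log 2 (k + 1)) {k | f k x ≠ 0} := by
  intro k hk k' hk' hlog
  simp only at hlog
  by_cases h0 : Nat.log 2 (k + 1) = 0
  · have h0' := h0
    rw [hlog] at h0'
    rw [Nat.log_eq_zero_iff] at h0 h0'
    omega
  have hk0 : k ≠ 0 := by rintro rfl; simp at h0
  have hk0' : k' ≠ 0 := by rintro rfl; simp [hlog] at h0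
  have hj := eq_of_mem_dyadicIco (hf.mem_dyadicIco_of_ne_zero hk0 hk)
    (hlog ▸ hf.mem_dyadicIco_of_ne_zero hk0' hk')
  have hlo : 2 ^ Nat.log 2 (k + 1) ≤ k + 1 := Nat.pow_log_le_self 2 (by omega)
  have hlo' : 2 ^ Nat.log 2 (k' + 1) ≤ k' + 1 := Nat.pow_log_le_self 2 (by omega)
  rw [hlog] at hj hlo
  omega

lemma statTendsto_zero (x : ℝ) : StatTendsto (fun k => f k x) 0 := fun ε hε =>
  dens_zero_of_injOn_log <| (hf.injOn_log_support x).mono fun k (hk : ε ≤ |f k x - 0|) =>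
    show f k x ≠ 0 from fun h0 => by
      rw [h0, sub_zero, abs_zero] at hk
      linarith

lemma ae_infinite_mem_and_eq_one {K : Set ℕ} (hK : dens K 1) :
    ∀ᵐ x ∂volume.restrict (Ico (0 : ℝ) 1), {k | k ∈ K ∧ f k x = 1}.Infinite := by
  have hmissed := (show dens Kᶜ 0 by simpa using hK.compl).tendsto_volume_biUnion_dyadicIco
  filter_upwards [ae_restrict_mem measurableSet_Ico,
    ae_restrict_of_ae (ae_frequently_notMem_of_tendsto_measure_zero hmissed)] with x hx hfreq
  refine Nat.frequently_atTop_iff_infinite.1 (frequently_atTop.2 fun b => ?_)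
  obtain ⟨n, hbn, hn⟩ := frequently_atTop.1 hfreq (b + 1)
  obtain ⟨j, hj1, hj2, hxj⟩ := exists_mem_dyadicIco n hx
  have hjK : 2 ^ n - 2 + j ∈ K := by
    by_contra hjK
    exact hn (mem_iUnion₂.2 ⟨j, by simp [hj1, hj2, hjK], hxj⟩)
  have hbig : n < 2 ^ n := Nat.lt_two_pow_self
  refine ⟨2 ^ n - 2 + j, by omega, hjK, ?_⟩
  rw [hf n (by omega) j hj1 hj2, indicator_of_mem hxj, Pi.one_apply]

end IsTypewriter

theorem egorov_fails_for_stat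
    (μ : Measure ℝ) (hμ : μ = volume.restrict (Set.Ico (0:ℝ) 1))
    (f : ℕ → ℝ → ℝ)
    (hf : ∀ n : ℕ, 1 ≤ n → ∀ j : ℕ, 1 ≤ j → j ≤ 2 ^ n →
      f (2 ^ n - 2 + j) =
        Set.indicator (Set.Ico ((j - 1 : ℝ) / 2 ^ n) ((j : ℝ) / 2 ^ n)) 1) :
    (∀ᵐ x ∂μ, StatTendsto (fun k => f k x) 0) ∧
    (∀ K : Set ℕ, dens K 1 →
      ∀ᵐ x ∂μ, {k | k ∈ K ∧ f k x = 1}.Infinite) ∧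
    ¬ StatAUTendsto μ f 0 := by
  have htw : IsTypewriter f := hf
  have hinf : ∀ K : Set ℕ, dens K 1 → ∀ᵐ x ∂μ, {k | k ∈ K ∧ f k x = 1}.Infinite :=
    fun K hK => hμ ▸ htw.ae_infinite_mem_and_eq_one hK
  have hμ0 : μ ≠ 0 := by
    rw [hμ, Ne, Measure.restrict_eq_zero, Real.volume_Ico]
    norm_num
  exact ⟨ae_of_all _ htw.statTendsto_zero, hinf, not_statAUTendsto_zero_of_forall_dens_one hμ0
    fun K hK => (hinf K hK).mono fun _ hx => hx.nonempty⟩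
end
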